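/- Let G be a finite group, k ≥ 1 an integer, and fix signs t_0,…,t_{k−1} ∈ {+,−}. On H = (ℂ^G)^{⊗k} let T_i^g denote the operator acting as T^g_{t_i} on the i-th tensor factor and as the identity elsewhere. Let D_j (j ∈ G×G) be the operators on ℂ^{G×G} defined by D_j |κ⟩ = ∑_{m ∈ G×G} Ω^{κ}_{m j} |m⟩, and let |Ψ⟩ = (1/√|G|) ∑_{h∈G} |(h,1)⟩ ∈ ℂ^{G×G}. On H ⊗ ℂ^{G×G} define M_i = ∑_{(h,g) ∈ G×G} T_i^{g⁻¹} ⊗ D_{(h,g)}. Then (1_H ⊗ ⟨Ψ|) M_0 M_1 ⋯ M_{k−1} (1_H ⊗ |Ψ⟩) = ∑ T_0^{a_0} T_1^{a_1} ⋯ T_{k−1}^{a_{k−1}}, the sum over all tuples (a_0,…,a_{k−1}) ∈ G^k with a_{k−1} ⋯ a_1 a_0 = 1, and the reversed adjoint product (1_H ⊗ ⟨Ψ|) M_{k−1}† ⋯ M_0† (1_H ⊗ |Ψ⟩) yields the same operator. -/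

import Mathlib

open Matrix Kronecker BigOperators

noncomputable section

variable {G : Type*} [Group G] [Fintype G] [DecidableEq G]

/-- `L^g_+ : |z⟩ ↦ |gz⟩` (left multiplication by `g`). -/
def Lp (g : G) : Matrix G G ℂ := Matrix.of fun x z => if x = g * z then 1 else 0

/-- `L^g_- : |z⟩ ↦ |z g⁻¹⟩` (right multiplication by `g⁻¹`). -/
def Lm (g : G) : Matrix G G ℂ := Matrix.of fun x z => if x = z * g⁻¹ then 1 else 0

/-- `T^g_+ = |g⟩⟨g|`. -/
def Tp (g : G) : Matrix G G ℂ := Matrix.of fun x z => if x = g ∧ z = g then 1 else 0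

/-- `T^g_- = |g⁻¹⟩⟨g⁻¹|`. -/
def Tm (g : G) : Matrix G G ℂ := Tp g⁻¹

/-- Signed `L` operator: `true` stands for `+`, `false` for `−`. -/
def Lsgn (s : Bool) (g : G) : Matrix G G ℂ := if s then Lp g else Lm g

/-- Signed `T` operator: `true` stands for `+`, `false` for `−`. -/
def Tsgn (s : Bool) (g : G) : Matrix G G ℂ := if s then Tp g else Tm g

/-- The operator acting as `A` on the `i`-th tensor factor of `(ℂ^G)^{⊗k}`
and as the identity on all other factors. -/
def factor {k : ℕ} (i : Fin k) (A : Matrix G G ℂ) : Matrix (Fin k → G) (Fin k → G) ℂ :=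
  Matrix.of fun x y => if ∀ j, j ≠ i → x j = y j then A (x i) (y i) else 0

/-- The partial matrix element `(1_H ⊗ ⟨ψ|) Z (1_H ⊗ |ψ⟩)` of an operator `Z` on `H ⊗ ℂ^R`. -/
def pme {H R : Type*} [Fintype R] (ψ : R → ℂ) (Z : Matrix (H × R) (H × R) ℂ) :
    Matrix H H ℂ :=
  Matrix.of fun x y => ∑ a : R, ∑ b : R, (starRingEnd ℂ) (ψ a) * Z (x, a) (y, b) * ψ b

/-- The structure constants `Ω^κ_{mn}` of the quantum double. -/
def Om (k m n : G × G) : ℂ :=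
  if k.2 = m.2 * n.2 ∧ m.1 = k.1 ∧ n.1 = m.2⁻¹ * k.1 * m.2 then 1 else 0

/-- The operator `D_j` on `ℂ^{G×G}` defined by `D_j |κ⟩ = ∑_m Ω^κ_{m j} |m⟩`. -/
def Dop (j : G × G) : Matrix (G × G) (G × G) ℂ := Matrix.of fun m k => Om k m j

/-! Summing `D_{(h,g)}` over `h` gives the permutation matrix of right multiplication by
`(1, g)` on `ℂ^{G×G}`, and these matrices multiply like the group elements. Hence
`M₀ ⋯ M_{k-1} = ∑_a T₀^{a₀} ⋯ T_{k-1}^{a_{k-1}} ⊗ C_{(a_{k-1} ⋯ a₀)⁻¹}`, where `C_c` is right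
multiplication by `(1, c)`. Since `⟨Ψ|C_c|Ψ⟩ = δ_{c,1}`, the partial matrix element keeps exactly
the tuples with `a_{k-1} ⋯ a₀ = 1`. The reversed product of adjoints is the adjoint of the
product, and the resulting operator is self-adjoint: each of its terms is a product of commuting
self-adjoint operators acting on distinct tensor factors. -/

theorem List.prod_ofFn_sum {R κ : Type*} [Semiring R] [Fintype κ] :
    ∀ {n : ℕ} (f : Fin n → κ → R),
      (List.ofFn fun i => ∑ j, f i j).prod = ∑ x : Fin n → κ, (List.ofFn fun i => f i (x i)).prod
  | 0, f => by simp
  | n + 1, f => by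
    rw [List.ofFn_succ, List.prod_cons, List.prod_ofFn_sum, Finset.sum_mul_sum,
      ← (Fin.consEquiv fun _ => κ).sum_comp, Fintype.sum_prod_type]
    simp [Fin.consEquiv, List.ofFn_succ]

theorem isSelfAdjoint_list_prod {R : Type*} [Monoid R] [StarMul R] :
    ∀ {l : List R}, (∀ x ∈ l, IsSelfAdjoint x) → l.Pairwise Commute → IsSelfAdjoint l.prod
  | [], _, _ => by simp
  | x :: l, hsa, hc => by
    rw [List.pairwise_cons] at hc
    have hl : IsSelfAdjoint l.prod :=
      isSelfAdjoint_list_prod (fun y hy => hsa y (List.mem_cons_of_mem x hy)) hc.2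
    have hxl : Commute x l.prod := Commute.list_prod_right _ _ hc.1
    rw [List.prod_cons, IsSelfAdjoint, star_mul, hl.star_eq, (hsa x List.mem_cons_self).star_eq,
      hxl.eq]

theorem Matrix.kronecker_sum {ι l m n p α : Type*} [NonUnitalNonAssocSemiring α]
    (A : Matrix l m α) (s : Finset ι) (B : ι → Matrix n p α) :
    A ⊗ₖ ∑ i ∈ s, B i = ∑ i ∈ s, A ⊗ₖ B i := by
  ext ⟨_, _⟩ ⟨_, _⟩
  simp [Matrix.sum_apply, Finset.mul_sum]

theorem Matrix.list_prod_map_kronecker {ι l n α : Type*} [Fintype l] [Fintype n] [DecidableEq l]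
    [DecidableEq n] [CommSemiring α] (s : List ι) (A : ι → Matrix l l α) (B : ι → Matrix n n α) :
    (s.map fun i => A i ⊗ₖ B i).prod = (s.map A).prod ⊗ₖ (s.map B).prod := by
  induction s with
  | nil => simp
  | cons i s ih => simp [ih, mul_kronecker_mul]

def rightRegular (R : Type*) [Semiring R] {K : Type*} [Monoid K] [Fintype K] [DecidableEq K] :
    K →* Matrix K K R where
  toFun κ := Matrix.of fun a b => if b = a * κ then 1 else 0
  map_one' := by ext a b; simp [Matrix.one_apply, eq_comm]
  map_mul' κ κ' := by
    ext a b
    simp only [Matrix.mul_apply, of_apply, ite_mul, one_mul, zero_mul, Finset.sum_ite_eq',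
      Finset.mem_univ, if_true, mul_assoc]

theorem rightRegular_mulVec {R K : Type*} [Semiring R] [Monoid K] [Fintype K] [DecidableEq K]
    (κ : K) (v : K → R) (a : K) : (rightRegular R κ *ᵥ v) a = v (a * κ) := by
  simp [rightRegular, Matrix.mulVec, dotProduct]

section PartialMatrixElement

variable {H R : Type*} [Fintype R] (ψ : R → ℂ)

theorem pme_sum {ι : Type*} (s : Finset ι) (Z : ι → Matrix (H × R) (H × R) ℂ) :
    pme ψ (∑ i ∈ s, Z i) = ∑ i ∈ s, pme ψ (Z i) := by
  ext x y
  simp only [pme, of_apply, Matrix.sum_apply, Finset.mul_sum, Finset.sum_mul]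
  rw [Finset.sum_congr rfl fun a _ => Finset.sum_comm]
  exact Finset.sum_comm

theorem pme_kronecker (X : Matrix H H ℂ) (Y : Matrix R R ℂ) :
    pme ψ (X ⊗ₖ Y) = (star ψ ⬝ᵥ Y *ᵥ ψ) • X := by
  ext x y
  simp only [pme, of_apply, kronecker_apply, Matrix.smul_apply, smul_eq_mul, dotProduct, mulVec,
    Pi.star_apply, Finset.mul_sum, Finset.sum_mul]
  exact Finset.sum_congr rfl fun a _ => Finset.sum_congr rfl fun b _ => by
    rw [Complex.star_def]; ring

theorem pme_conjTranspose (Z : Matrix (H × R) (H × R) ℂ) : pme ψ Zᴴ = (pme ψ Z)ᴴ := by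
  ext x y
  simp only [pme, of_apply, conjTranspose_apply, star_sum, star_mul', Complex.star_def,
    Complex.conj_conj]
  rw [Finset.sum_comm]
  exact Finset.sum_congr rfl fun a _ => Finset.sum_congr rfl fun b _ => by ring

end PartialMatrixElement

section Factor

variable {X : Type*} [DecidableEq X] {k : ℕ}

theorem factor_mul_factor_apply [Fintype X] {i j : Fin k} (hij : i ≠ j) (A B : Matrix X X ℂ)
    (x y : Fin k → X) :
    (factor i A * factor j B) x y =
      if ∀ m, m ≠ i → m ≠ j → x m = y m then A (x i) (y i) * B (x j) (y j) else 0 := by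
  rw [Matrix.mul_apply, Finset.sum_eq_single (Function.update x i (y i))]
  · simp only [factor, of_apply]
    have hcond : (∀ m, m ≠ j → Function.update x i (y i) m = y m) ↔
        ∀ m, m ≠ i → m ≠ j → x m = y m := by
      refine forall_congr' fun m => ?_
      rcases eq_or_ne m i with rfl | hmi
      · simp [hij]
      · simp [hmi]
    simp only [Function.update_self, Function.update_of_ne hij.symm, hcond, mul_ite, mul_zero,
      if_pos fun m hm => (Function.update_of_ne hm (y i) x).symm]
  · intro z _ hz
    simp only [factor, of_apply]
    by_cases hxz : ∀ m, m ≠ i → x m = z m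
    · have hzy : ¬ ∀ m, m ≠ j → z m = y m := by
        refine fun hzy => hz (funext fun m => ?_)
        rcases eq_or_ne m i with rfl | hmi
        · simp [hzy m hij]
        · simp [Function.update_of_ne hmi, hxz m hmi]
      rw [if_neg hzy, mul_zero]
    · rw [if_neg hxz, zero_mul]
  · simp

theorem factor_commute [Fintype X] {i j : Fin k} (hij : i ≠ j) (A B : Matrix X X ℂ) :
    Commute (factor i A) (factor j B) := by
  ext x y
  rw [factor_mul_factor_apply hij, factor_mul_factor_apply hij.symm, mul_comm]
  simp only [imp.swap (a := _ ≠ i)]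

theorem factor_conjTranspose (i : Fin k) (A : Matrix X X ℂ) : (factor i A)ᴴ = factor i Aᴴ := by
  ext x y
  simp only [conjTranspose_apply, factor, of_apply, eq_comm (a := x _)]
  split_ifs <;> simp

theorem isSelfAdjoint_list_prod_factor [Fintype X] (A : Fin k → Matrix X X ℂ)
    (hA : ∀ i, (A i).IsHermitian) :
    IsSelfAdjoint ((List.finRange k).map fun i => factor i (A i)).prod := by
  refine isSelfAdjoint_list_prod ?_ (List.pairwise_map.2 ((List.nodup_finRange k).imp ?_))
  · simp only [List.mem_map]
    rintro _ ⟨i, -, rfl⟩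
    rw [IsSelfAdjoint, star_eq_conjTranspose, factor_conjTranspose, (hA i).eq]
  · exact fun hij => factor_commute hij _ _

end Factor

theorem Tsgn_isHermitian {Γ : Type*} [Group Γ] [DecidableEq Γ] (s : Bool) (g : Γ) :
    (Tsgn s g).IsHermitian := by
  have hTp : ∀ u : Γ, (Tp u).IsHermitian := fun u => by
    ext x z
    simp only [conjTranspose_apply, Tp, of_apply, and_comm]
    split_ifs <;> simp
  cases s
  · exact hTp g⁻¹
  · exact hTp g

theorem sum_Dop_eq_rightRegular (g : G) : ∑ h : G, Dop (h, g) = rightRegular ℂ ((1 : G), g) := by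
  ext a b
  simp only [Dop, Om, rightRegular, Matrix.sum_apply, MonoidHom.coe_mk, OneHom.coe_mk, of_apply]
  by_cases h : b.2 = a.2 * g ∧ a.1 = b.1
  · simp [h, Prod.ext_iff]
  · rw [if_neg fun hb => h ⟨by simp [hb], by simp [hb]⟩]
    exact Finset.sum_eq_zero fun x _ => if_neg fun hx => h ⟨hx.1, hx.2.1⟩

variable (G) in
def Ψ : G × G → ℂ := fun p => if p.2 = 1 then (Real.sqrt (Fintype.card G) : ℂ)⁻¹ else 0

theorem star_Ψ_dotProduct_rightRegular_mulVec (c : G) :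
    star (Ψ G) ⬝ᵥ rightRegular ℂ ((1 : G), c) *ᵥ Ψ G = if c = 1 then 1 else 0 := by
  simp only [dotProduct, rightRegular_mulVec, Fintype.sum_prod_type, Pi.star_apply, Ψ,
    Prod.mk_mul_mk, mul_one]
  by_cases hc : c = 1
  · subst hc
    simp only [RCLike.star_def, mul_one, mul_ite, mul_zero, Finset.sum_ite_eq', Finset.mem_univ,
      if_true, map_inv₀, Complex.conj_ofReal, Finset.sum_const, Finset.card_univ, nsmul_eq_mul]
    rw [← mul_inv, ← Complex.ofReal_mul, Real.mul_self_sqrt (Nat.cast_nonneg _),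
      Complex.ofReal_natCast, mul_inv_cancel₀ (Nat.cast_ne_zero.2 Fintype.card_ne_zero)]
  · simp [hc, mul_eq_one_iff_eq_inv]

theorem pme_Ψ_kronecker_rightRegular {H : Type*} (X : Matrix H H ℂ) (c : G) :
    pme (Ψ G) (X ⊗ₖ rightRegular ℂ ((1 : G), c)) = if c = 1 then X else 0 := by
  rw [pme_kronecker, star_Ψ_dotProduct_rightRegular_mulVec]
  split_ifs <;> simp

theorem pme_Ψ_list_prod_sum_kronecker {H : Type*} [Fintype H] [DecidableEq H] {n : ℕ}
    (F : Fin n → G → Matrix H H ℂ) :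
    pme (Ψ G) ((List.finRange n).map fun i => ∑ g, F i g ⊗ₖ rightRegular ℂ ((1 : G), g⁻¹)).prod
      = ∑ a ∈ Finset.univ.filter (fun a : Fin n → G => ((List.finRange n).reverse.map a).prod = 1),
          ((List.finRange n).map fun i => F i (a i)).prod := by
  rw [← List.ofFn_eq_map, List.prod_ofFn_sum, pme_sum, Finset.sum_filter]
  refine Finset.sum_congr rfl fun a _ => ?_
  have hshift : ((List.finRange n).map fun i => rightRegular ℂ ((1 : G), (a i)⁻¹)).prod
      = rightRegular ℂ ((1 : G), ((List.finRange n).reverse.map a).prod⁻¹) := by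
    rw [List.prod_inv_reverse, List.map_reverse, List.map_reverse, List.reverse_reverse,
      List.map_map]
    have := map_list_prod ((rightRegular ℂ).comp (MonoidHom.inr G G))
      ((List.finRange n).map fun i => (a i)⁻¹)
    simp only [MonoidHom.coe_comp, Function.comp_apply, MonoidHom.inr_apply, List.map_map] at this
    exact this.symm
  rw [List.ofFn_eq_map, Matrix.list_prod_map_kronecker, hshift, pme_Ψ_kronecker_rightRegular]
  simp only [inv_eq_one]

theorem statement11_general (k : ℕ) (t : Fin k → Bool)
    (M : Fin k → Matrix ((Fin k → G) × (G × G)) ((Fin k → G) × (G × G)) ℂ)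
    (hM : ∀ i, M i = ∑ p : G × G, (factor i (Tsgn (t i) p.2⁻¹)) ⊗ₖ Dop p)
    (ψ : G × G → ℂ)
    (hψ : ∀ p, ψ p = if p.2 = 1 then (Real.sqrt (Fintype.card G) : ℂ)⁻¹ else 0)
    (B : Matrix (Fin k → G) (Fin k → G) ℂ)
    (hB : B = ∑ a ∈ Finset.univ.filter
        (fun a : Fin k → G => (((List.finRange k).reverse).map a).prod = 1),
      ((List.finRange k).map (fun i => factor i (Tsgn (t i) (a i)))).prod) :
    pme ψ (((List.finRange k).map M).prod) = B ∧
    pme ψ ((((List.finRange k).reverse).map (fun i => (M i)ᴴ)).prod) = B := by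
  obtain rfl : ψ = Ψ G := funext hψ
  have hM' : ∀ i, M i = ∑ g, factor i (Tsgn (t i) g) ⊗ₖ rightRegular ℂ ((1 : G), g⁻¹) := by
    intro i
    rw [hM i, Fintype.sum_prod_type_right]
    simp_rw [← Matrix.kronecker_sum, sum_Dop_eq_rightRegular]
    exact Fintype.sum_equiv (Equiv.inv G) _ _ fun g => by simp
  have hprod : pme (Ψ G) ((List.finRange k).map M).prod = B := by
    rw [funext hM', pme_Ψ_list_prod_sum_kronecker, hB]
  refine ⟨hprod, ?_⟩
  rw [List.map_reverse, show (fun i => (M i)ᴴ) = conjTranspose ∘ M from rfl, ← List.map_map,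
    ← conjTranspose_list_prod, pme_conjTranspose, hprod, hB, conjTranspose_sum]
  exact Finset.sum_congr rfl fun a _ =>
    isSelfAdjoint_list_prod_factor _ fun i => Tsgn_isHermitian _ _

/-- With `Mᵢ = ∑_{(h,g)} Tᵢ^{g⁻¹} ⊗ D_{(h,g)}` and
`|Ψ⟩ = |G|^{-1/2} ∑_h |(h,1)⟩`, the partial matrix element of the ordered product
`M₀ ⋯ M_{k-1}` (and of the reversed product of adjoints) equals
`∑_{a_{k-1}⋯a₁a₀=1} T₀^{a₀} ⋯ T_{k-1}^{a_{k-1}}`. -/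
theorem statement11 (k : ℕ) (hk : 1 ≤ k) (t : Fin k → Bool)
    (M : Fin k → Matrix ((Fin k → G) × (G × G)) ((Fin k → G) × (G × G)) ℂ)
    (hM : ∀ i, M i = ∑ p : G × G, (factor i (Tsgn (t i) p.2⁻¹)) ⊗ₖ Dop p)
    (ψ : G × G → ℂ)
    (hψ : ∀ p, ψ p = if p.2 = 1 then (Real.sqrt (Fintype.card G) : ℂ)⁻¹ else 0)
    (B : Matrix (Fin k → G) (Fin k → G) ℂ)
    (hB : B = ∑ a ∈ Finset.univ.filter
        (fun a : Fin k → G => (((List.finRange k).reverse).map a).prod = 1),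
      ((List.finRange k).map (fun i => factor i (Tsgn (t i) (a i)))).prod) :
    pme ψ (((List.finRange k).map M).prod) = B ∧
    pme ψ ((((List.finRange k).reverse).map (fun i => (M i)ᴴ)).prod) = B :=
  statement11_general k t M hM ψ hψ B hB
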